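/- arXiv:2605.30657 — 3 statements merged into one kernel-verified Lean document; each statement's English description precedes it below -/
import Mathlib

section
/- Let $u, v \in \ell^2(\mathbb{Z})$. Then $\Big\| \sum_{\xi_1+\xi_2=\xi} \frac{\langle \xi_2\rangle^{1/2}}{\langle\xi\rangle\,\langle\xi_1\rangle^{1/2}}\, u(\xi_1)\, v(\xi_2) \Big\|_{\ell^2_\xi} \le C\, \|u\|_{\ell^2}\, \|v\|_{\ell^2}$ for some absolute constant $C > 0$. -/
open Complex
open MeasureTheory

/-- Japanese bracket `⟨ξ⟩ = (1 + ξ²)^{1/2}` on the integers. -/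
noncomputable def jap (ξ : ℤ) : ℝ := Real.sqrt (1 + (ξ : ℝ) ^ 2)

lemma jap_nonneg (ξ : ℤ) : 0 ≤ jap ξ := Real.sqrt_nonneg _
lemma one_le_jap (ξ : ℤ) : 1 ≤ jap ξ := by
  have h : (1:ℝ) ≤ 1 + (ξ:ℝ)^2 := by nlinarith [sq_nonneg ((ξ:ℝ))]
  calc (1:ℝ) = Real.sqrt 1 := by simp
    _ ≤ _ := Real.sqrt_le_sqrt h
lemma jap_pos (ξ : ℤ) : 0 < jap ξ := lt_of_lt_of_le one_pos (one_le_jap ξ)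
lemma jap_sq (ξ : ℤ) : jap ξ ^ 2 = 1 + (ξ:ℝ)^2 := Real.sq_sqrt (by positivity)
lemma sqrt_jap_pos (ξ : ℤ) : 0 < Real.sqrt (jap ξ) := Real.sqrt_pos.2 (jap_pos ξ)

lemma mbound (ξ ξ₁ : ℤ) :
    Real.sqrt (jap (ξ - ξ₁)) / (jap ξ * Real.sqrt (jap ξ₁))
      ≤ Real.sqrt 2 / jap ξ
        + Real.sqrt 2 / (Real.sqrt (jap ξ) * Real.sqrt (jap ξ₁)) := by
  have h2 : (0:ℝ) ≤ 2 := by norm_num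
  have hd1 : (0:ℝ) ≤ Real.sqrt 2 / jap ξ :=
    div_nonneg (Real.sqrt_nonneg 2) (jap_nonneg ξ)
  have hd2 : (0:ℝ) ≤ Real.sqrt 2 / (Real.sqrt (jap ξ) * Real.sqrt (jap ξ₁)) :=
    div_nonneg (Real.sqrt_nonneg 2)
      (mul_nonneg (Real.sqrt_nonneg _) (Real.sqrt_nonneg _))
  by_cases h : jap (ξ - ξ₁) ≤ 2 * jap ξ₁
  · have h1 : Real.sqrt (jap (ξ - ξ₁)) ≤ Real.sqrt 2 * Real.sqrt (jap ξ₁) := by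
      rw [← Real.sqrt_mul h2]
      exact Real.sqrt_le_sqrt h
    have hstep : Real.sqrt (jap (ξ - ξ₁)) / (jap ξ * Real.sqrt (jap ξ₁))
        ≤ (Real.sqrt 2 * Real.sqrt (jap ξ₁)) / (jap ξ * Real.sqrt (jap ξ₁)) := by
      gcongr
      exact le_of_lt (mul_pos (jap_pos ξ) (sqrt_jap_pos ξ₁))
    refine le_trans hstep (le_trans (le_of_eq ?_) (le_add_of_nonneg_right hd2))
    rw [mul_comm (jap ξ) _, mul_comm (Real.sqrt 2) _,
      mul_div_mul_left _ _ (ne_of_gt (sqrt_jap_pos ξ₁))]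
  · push_neg at h
    have hsq : 4 * (1 + (ξ₁:ℝ)^2) < 1 + ((ξ:ℝ) - (ξ₁:ℝ))^2 := by
      have := mul_self_lt_mul_self (mul_nonneg h2 (jap_nonneg ξ₁)) h
      rw [← pow_two, ← pow_two, mul_pow, jap_sq, jap_sq] at this
      push_cast at this
      nlinarith [this]
    have key : jap (ξ - ξ₁) ≤ 2 * jap ξ := by
      rw [jap, jap, show (2:ℝ) = Real.sqrt 4 by
          rw [show (4:ℝ) = 2^2 by norm_num, Real.sqrt_sq h2],
        ← Real.sqrt_mul (by norm_num)]
      apply Real.sqrt_le_sqrt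
      push_cast
      nlinarith [sq_nonneg ((ξ:ℝ) + (ξ₁:ℝ)), hsq]
    have h1 : Real.sqrt (jap (ξ - ξ₁)) ≤ Real.sqrt 2 * Real.sqrt (jap ξ) := by
      rw [← Real.sqrt_mul h2]
      exact Real.sqrt_le_sqrt key
    have hstep : Real.sqrt (jap (ξ - ξ₁)) / (jap ξ * Real.sqrt (jap ξ₁))
        ≤ (Real.sqrt 2 * Real.sqrt (jap ξ)) / (jap ξ * Real.sqrt (jap ξ₁)) := by
      gcongr
      exact le_of_lt (mul_pos (jap_pos ξ) (sqrt_jap_pos ξ₁))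
    refine le_trans hstep (le_trans (le_of_eq ?_) (le_add_of_nonneg_left hd1))
    have hj : Real.sqrt (jap ξ) * Real.sqrt (jap ξ) = jap ξ :=
      Real.mul_self_sqrt (jap_nonneg ξ)
    rw [div_eq_div_iff (mul_pos (jap_pos ξ) (sqrt_jap_pos ξ₁)).ne'
      (mul_pos (sqrt_jap_pos ξ) (sqrt_jap_pos ξ₁)).ne']
    linear_combination (Real.sqrt 2 * Real.sqrt (jap ξ₁)) * hj


/-- ENNReal brackets -/
noncomputable def Ja (ξ : ℤ) : ENNReal := ENNReal.ofReal (jap ξ)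
noncomputable def Jh (ξ : ℤ) : ENNReal := ENNReal.ofReal (Real.sqrt (jap ξ))
noncomputable def S0e : ENNReal := ∑' ξ : ℤ, (Ja ξ)⁻¹ ^ 2

lemma Jh_sq (ξ : ℤ) : Jh ξ ^ 2 = Ja ξ := by
  rw [Jh, Ja, ← ENNReal.ofReal_pow (Real.sqrt_nonneg _), Real.sq_sqrt (jap_nonneg ξ)]

lemma erpow2 (f : ℤ → ENNReal) : (∑' ξ, f ξ ^ (2:ℝ)) = ∑' ξ, f ξ ^ 2 := by
  congr 1; funext ξ
  rw [show ((2:ℝ)) = ((2:ℕ):ℝ) by norm_num, ENNReal.rpow_natCast]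

lemma ehalf_sq (x : ENNReal) : (x ^ ((1:ℝ)/2)) ^ 2 = x := by
  rw [← ENNReal.rpow_natCast (x ^ ((1:ℝ)/2)) 2, ← ENNReal.rpow_mul]
  norm_num

lemma esq_half (x : ENNReal) : (x ^ 2) ^ ((1:ℝ)/2) = x := by
  rw [← ENNReal.rpow_natCast x 2, ← ENNReal.rpow_mul]
  norm_num

lemma ecs (f g : ℤ → ENNReal) :
    ∑' ξ, f ξ * g ξ ≤ (∑' ξ, f ξ ^ 2) ^ ((1:ℝ)/2) * (∑' ξ, g ξ ^ 2) ^ ((1:ℝ)/2) := by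
  have hc : (2:ℝ).HolderConjugate 2 := Real.HolderConjugate.two_two
  have h := ENNReal.lintegral_mul_le_Lp_mul_Lq (Measure.count : Measure ℤ)
    hc (f := f) (g := g) (by measurability) (by measurability)
  simp only [lintegral_count, Pi.mul_apply] at h
  rw [← erpow2 f, ← erpow2 g]
  exact h

lemma emink (f g : ℤ → ENNReal) :
    (∑' ξ, (f ξ + g ξ) ^ 2) ^ ((1:ℝ)/2)
      ≤ (∑' ξ, f ξ ^ 2) ^ ((1:ℝ)/2) + (∑' ξ, g ξ ^ 2) ^ ((1:ℝ)/2) := by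
  have h := ENNReal.lintegral_Lp_add_le (μ := (Measure.count : Measure ℤ))
    (f := f) (g := g) (by measurability) (by measurability) (by norm_num : (1:ℝ) ≤ 2)
  simp only [lintegral_count, Pi.add_apply] at h
  rw [← erpow2 f, ← erpow2 g, ← erpow2 (fun ξ => f ξ + g ξ)]
  exact h

/-- convolution Cauchy-Schwarz with shift -/
lemma convCS (a b : ℤ → ENNReal) (ξ : ℤ) :
    ∑' ξ₁, a ξ₁ * b (ξ - ξ₁)
      ≤ (∑' t, a t ^ 2) ^ ((1:ℝ)/2) * (∑' t, b t ^ 2) ^ ((1:ℝ)/2) := by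
  calc ∑' ξ₁, a ξ₁ * b (ξ - ξ₁)
      ≤ (∑' t, a t ^ 2) ^ ((1:ℝ)/2) * (∑' ξ₁, (b (ξ - ξ₁)) ^ 2) ^ ((1:ℝ)/2) :=
        ecs a (fun ξ₁ => b (ξ - ξ₁))
    _ = _ := by
        have hshift : (∑' ξ₁ : ℤ, b (ξ - ξ₁) ^ 2) = ∑' t, b t ^ 2 :=
          (Equiv.subLeft ξ).tsum_eq (fun t => b t ^ 2)
        rw [hshift]

lemma Fbound (a b : ℤ → ENNReal) :
    ∑' ξ, ((Ja ξ)⁻¹ * ∑' ξ₁, a ξ₁ * b (ξ - ξ₁)) ^ 2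
      ≤ S0e * ((∑' t, a t ^ 2) * (∑' t, b t ^ 2)) := by
  have h1 : ∀ ξ : ℤ, ((Ja ξ)⁻¹ * ∑' ξ₁, a ξ₁ * b (ξ - ξ₁)) ^ 2
      ≤ (Ja ξ)⁻¹ ^ 2 * ((∑' t, a t ^ 2) * (∑' t, b t ^ 2)) := by
    intro ξ
    rw [mul_pow]
    gcongr
    calc (∑' ξ₁, a ξ₁ * b (ξ - ξ₁)) ^ 2
        ≤ ((∑' t, a t ^ 2) ^ ((1:ℝ)/2) * (∑' t, b t ^ 2) ^ ((1:ℝ)/2)) ^ 2 := by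
          gcongr
          exact convCS a b ξ
      _ = _ := by rw [mul_pow, ehalf_sq, ehalf_sq]
  calc ∑' ξ, ((Ja ξ)⁻¹ * ∑' ξ₁, a ξ₁ * b (ξ - ξ₁)) ^ 2
      ≤ ∑' ξ, (Ja ξ)⁻¹ ^ 2 * ((∑' t, a t ^ 2) * (∑' t, b t ^ 2)) := Summable.tsum_le_tsum h1 ENNReal.summable ENNReal.summable
    _ = S0e * ((∑' t, a t ^ 2) * (∑' t, b t ^ 2)) := by
        rw [ENNReal.tsum_mul_right]; rfl

lemma Gbound (a b : ℤ → ENNReal) :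
    ∑' ξ, ((Jh ξ)⁻¹ * ∑' ξ₁, (Jh ξ₁)⁻¹ * (a ξ₁ * b (ξ - ξ₁))) ^ 2
      ≤ S0e * ((∑' t, a t ^ 2) * (∑' t, b t ^ 2)) := by
  have h1 : ∀ ξ : ℤ, ((Jh ξ)⁻¹ * ∑' ξ₁, (Jh ξ₁)⁻¹ * (a ξ₁ * b (ξ - ξ₁))) ^ 2
      ≤ (Ja ξ)⁻¹ * ((∑' t, a t ^ 2) * ∑' ξ₁, (Ja ξ₁)⁻¹ * b (ξ - ξ₁) ^ 2) := by
    intro ξ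
    have hK : (∑' ξ₁, (Jh ξ₁)⁻¹ * (a ξ₁ * b (ξ - ξ₁))) ^ 2
        ≤ (∑' t, a t ^ 2) * ∑' ξ₁, (Ja ξ₁)⁻¹ * b (ξ - ξ₁) ^ 2 := by
      have he : (∑' ξ₁, (Jh ξ₁)⁻¹ * (a ξ₁ * b (ξ - ξ₁)))
          = ∑' ξ₁, a ξ₁ * ((Jh ξ₁)⁻¹ * b (ξ - ξ₁)) := tsum_congr (fun ξ₁ => by ring)
      rw [he]
      calc (∑' ξ₁, a ξ₁ * ((Jh ξ₁)⁻¹ * b (ξ - ξ₁))) ^ 2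
          ≤ ((∑' t, a t ^ 2) ^ ((1:ℝ)/2)
              * (∑' ξ₁, ((Jh ξ₁)⁻¹ * b (ξ - ξ₁)) ^ 2) ^ ((1:ℝ)/2)) ^ 2 := by
            gcongr
            exact ecs a (fun ξ₁ => (Jh ξ₁)⁻¹ * b (ξ - ξ₁))
        _ = (∑' t, a t ^ 2) * ∑' ξ₁, ((Jh ξ₁)⁻¹ * b (ξ - ξ₁)) ^ 2 := by
            rw [mul_pow, ehalf_sq, ehalf_sq]
        _ = (∑' t, a t ^ 2) * ∑' ξ₁, (Ja ξ₁)⁻¹ * b (ξ - ξ₁) ^ 2 := by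
            congr 1
            refine tsum_congr fun ξ₁ => ?_
            rw [mul_pow, ← ENNReal.inv_pow, Jh_sq]
    calc ((Jh ξ)⁻¹ * ∑' ξ₁, (Jh ξ₁)⁻¹ * (a ξ₁ * b (ξ - ξ₁))) ^ 2
        = (Ja ξ)⁻¹ * (∑' ξ₁, (Jh ξ₁)⁻¹ * (a ξ₁ * b (ξ - ξ₁))) ^ 2 := by
          rw [mul_pow, ← ENNReal.inv_pow, Jh_sq]
      _ ≤ _ := mul_le_mul_right hK _
  have hW : (∑' ξ : ℤ, ∑' ξ₁ : ℤ, (Ja ξ)⁻¹ * ((Ja ξ₁)⁻¹ * b (ξ - ξ₁) ^ 2))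
      ≤ (∑' t, b t ^ 2) * S0e := by
    calc ∑' ξ : ℤ, ∑' ξ₁ : ℤ, (Ja ξ)⁻¹ * ((Ja ξ₁)⁻¹ * b (ξ - ξ₁) ^ 2)
        = ∑' ξ₁ : ℤ, ∑' ξ : ℤ, (Ja ξ)⁻¹ * ((Ja ξ₁)⁻¹ * b (ξ - ξ₁) ^ 2) :=
          ENNReal.tsum_comm
      _ = ∑' ξ₁ : ℤ, ∑' ξ₂ : ℤ, (Ja (ξ₂ + ξ₁))⁻¹ * ((Ja ξ₁)⁻¹ * b ξ₂ ^ 2) := by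
          refine tsum_congr fun ξ₁ => ?_
          have := (Equiv.addRight ξ₁).tsum_eq
            (fun ξ => (Ja ξ)⁻¹ * ((Ja ξ₁)⁻¹ * b (ξ - ξ₁) ^ 2))
          simp only [Equiv.coe_addRight, add_sub_cancel_right] at this
          exact this.symm
      _ = ∑' ξ₂ : ℤ, ∑' ξ₁ : ℤ, (Ja (ξ₂ + ξ₁))⁻¹ * ((Ja ξ₁)⁻¹ * b ξ₂ ^ 2) :=
          ENNReal.tsum_comm
      _ = ∑' ξ₂ : ℤ, b ξ₂ ^ 2 * ∑' ξ₁ : ℤ, (Ja ξ₁)⁻¹ * (Ja (ξ₂ + ξ₁))⁻¹ := by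
          refine tsum_congr fun ξ₂ => ?_
          rw [← ENNReal.tsum_mul_left]
          exact tsum_congr fun ξ₁ => by ring
      _ ≤ ∑' ξ₂ : ℤ, b ξ₂ ^ 2 * S0e := by
          refine Summable.tsum_le_tsum (fun ξ₂ => ?_) ENNReal.summable ENNReal.summable
          refine mul_le_mul_right ?_ _
          calc ∑' ξ₁ : ℤ, (Ja ξ₁)⁻¹ * (Ja (ξ₂ + ξ₁))⁻¹
              ≤ (∑' ξ₁ : ℤ, (Ja ξ₁)⁻¹ ^ 2) ^ ((1:ℝ)/2)
                * (∑' ξ₁ : ℤ, (Ja (ξ₂ + ξ₁))⁻¹ ^ 2) ^ ((1:ℝ)/2) :=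
                ecs (fun ξ₁ => (Ja ξ₁)⁻¹) (fun ξ₁ => (Ja (ξ₂ + ξ₁))⁻¹)
            _ = S0e ^ ((1:ℝ)/2) * S0e ^ ((1:ℝ)/2) := by
                have hsh : (∑' ξ₁ : ℤ, (Ja (ξ₂ + ξ₁))⁻¹ ^ 2) = S0e :=
                  (Equiv.addLeft ξ₂).tsum_eq (fun t => (Ja t)⁻¹ ^ 2)
                rw [hsh]; rfl
            _ = S0e := by rw [← pow_two, ehalf_sq]
      _ = (∑' t, b t ^ 2) * S0e := ENNReal.tsum_mul_right
  calc ∑' ξ, ((Jh ξ)⁻¹ * ∑' ξ₁, (Jh ξ₁)⁻¹ * (a ξ₁ * b (ξ - ξ₁))) ^ 2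
      ≤ ∑' ξ, (Ja ξ)⁻¹ * ((∑' t, a t ^ 2) * ∑' ξ₁, (Ja ξ₁)⁻¹ * b (ξ - ξ₁) ^ 2) :=
        Summable.tsum_le_tsum h1 ENNReal.summable ENNReal.summable
    _ = (∑' t, a t ^ 2) * ∑' ξ : ℤ, ∑' ξ₁ : ℤ, (Ja ξ)⁻¹ * ((Ja ξ₁)⁻¹ * b (ξ - ξ₁) ^ 2) := by
        rw [← ENNReal.tsum_mul_left]
        refine tsum_congr fun ξ => ?_
        rw [ENNReal.tsum_mul_left]
        ring
    _ ≤ (∑' t, a t ^ 2) * ((∑' t, b t ^ 2) * S0e) := mul_le_mul_right hW _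
    _ = S0e * ((∑' t, a t ^ 2) * (∑' t, b t ^ 2)) := by ring

lemma Jh_ne_zero (ξ : ℤ) : Jh ξ ≠ 0 := by
  rw [Jh, Ne, ENNReal.ofReal_eq_zero, not_le]
  exact sqrt_jap_pos ξ

lemma Jh_ne_top (ξ : ℤ) : Jh ξ ≠ ⊤ := ENNReal.ofReal_ne_top

lemma mEbound (ξ ξ₁ : ℤ) :
    ENNReal.ofReal (Real.sqrt (jap (ξ - ξ₁)) / (jap ξ * Real.sqrt (jap ξ₁)))
      ≤ ENNReal.ofReal (Real.sqrt 2) * (Ja ξ)⁻¹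
        + ENNReal.ofReal (Real.sqrt 2) * ((Jh ξ)⁻¹ * (Jh ξ₁)⁻¹) := by
  have h1 : ENNReal.ofReal (Real.sqrt 2 / jap ξ)
      = ENNReal.ofReal (Real.sqrt 2) * (Ja ξ)⁻¹ := by
    rw [ENNReal.ofReal_div_of_pos (jap_pos ξ), div_eq_mul_inv]; rfl
  have h2 : ENNReal.ofReal (Real.sqrt 2 / (Real.sqrt (jap ξ) * Real.sqrt (jap ξ₁)))
      = ENNReal.ofReal (Real.sqrt 2) * ((Jh ξ)⁻¹ * (Jh ξ₁)⁻¹) := by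
    have hz : ENNReal.ofReal (Real.sqrt (jap ξ)) ≠ 0 := by
      rw [Ne, ENNReal.ofReal_eq_zero, not_le]; exact sqrt_jap_pos ξ
    rw [ENNReal.ofReal_div_of_pos (mul_pos (sqrt_jap_pos ξ) (sqrt_jap_pos ξ₁)),
      ENNReal.ofReal_mul (Real.sqrt_nonneg _), div_eq_mul_inv,
      ENNReal.mul_inv (Or.inl hz) (Or.inl ENNReal.ofReal_ne_top)]
    rfl
  rw [← h1, ← h2, ← ENNReal.ofReal_add
    (div_nonneg (Real.sqrt_nonneg 2) (jap_nonneg ξ))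
    (div_nonneg (Real.sqrt_nonneg 2) (mul_nonneg (Real.sqrt_nonneg _) (Real.sqrt_nonneg _)))]
  exact ENNReal.ofReal_le_ofReal (mbound ξ ξ₁)

lemma keybound (a b : ℤ → ENNReal) :
    (∑' ξ : ℤ, (∑' ξ₁ : ℤ,
        ENNReal.ofReal (Real.sqrt (jap (ξ - ξ₁)) / (jap ξ * Real.sqrt (jap ξ₁)))
          * (a ξ₁ * b (ξ - ξ₁))) ^ 2) ^ ((1:ℝ)/2)
      ≤ ENNReal.ofReal (Real.sqrt 2) * 2 * S0e ^ ((1:ℝ)/2)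
          * ((∑' t, a t ^ 2) ^ ((1:ℝ)/2) * (∑' t, b t ^ 2) ^ ((1:ℝ)/2)) := by
  set c2 : ENNReal := ENNReal.ofReal (Real.sqrt 2) with hc2
  set F : ℤ → ENNReal := fun ξ => (Ja ξ)⁻¹ * ∑' ξ₁, a ξ₁ * b (ξ - ξ₁) with hF
  set G : ℤ → ENNReal := fun ξ =>
    (Jh ξ)⁻¹ * ∑' ξ₁, (Jh ξ₁)⁻¹ * (a ξ₁ * b (ξ - ξ₁)) with hG
  have hP : ∀ ξ : ℤ, (∑' ξ₁ : ℤ,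
      ENNReal.ofReal (Real.sqrt (jap (ξ - ξ₁)) / (jap ξ * Real.sqrt (jap ξ₁)))
        * (a ξ₁ * b (ξ - ξ₁))) ≤ c2 * (F ξ + G ξ) := by
    intro ξ
    calc (∑' ξ₁ : ℤ, ENNReal.ofReal (Real.sqrt (jap (ξ - ξ₁)) / (jap ξ * Real.sqrt (jap ξ₁)))
          * (a ξ₁ * b (ξ - ξ₁)))
        ≤ ∑' ξ₁ : ℤ, ((c2 * (Ja ξ)⁻¹) * (a ξ₁ * b (ξ - ξ₁))
            + (c2 * (Jh ξ)⁻¹) * ((Jh ξ₁)⁻¹ * (a ξ₁ * b (ξ - ξ₁)))) := by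
          refine Summable.tsum_le_tsum (fun ξ₁ => ?_) ENNReal.summable ENNReal.summable
          calc ENNReal.ofReal (Real.sqrt (jap (ξ - ξ₁)) / (jap ξ * Real.sqrt (jap ξ₁)))
                * (a ξ₁ * b (ξ - ξ₁))
              ≤ (c2 * (Ja ξ)⁻¹ + c2 * ((Jh ξ)⁻¹ * (Jh ξ₁)⁻¹)) * (a ξ₁ * b (ξ - ξ₁)) :=
                mul_le_mul_left (mEbound ξ ξ₁) _
            _ = (c2 * (Ja ξ)⁻¹) * (a ξ₁ * b (ξ - ξ₁))
                + (c2 * (Jh ξ)⁻¹) * ((Jh ξ₁)⁻¹ * (a ξ₁ * b (ξ - ξ₁))) := by ring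
      _ = (c2 * (Ja ξ)⁻¹) * (∑' ξ₁, a ξ₁ * b (ξ - ξ₁))
          + (c2 * (Jh ξ)⁻¹) * (∑' ξ₁, (Jh ξ₁)⁻¹ * (a ξ₁ * b (ξ - ξ₁))) := by
          rw [ENNReal.tsum_add, ENNReal.tsum_mul_left, ENNReal.tsum_mul_left]
      _ = c2 * (F ξ + G ξ) := by rw [hF, hG]; ring
  calc (∑' ξ : ℤ, (∑' ξ₁ : ℤ,
        ENNReal.ofReal (Real.sqrt (jap (ξ - ξ₁)) / (jap ξ * Real.sqrt (jap ξ₁)))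
          * (a ξ₁ * b (ξ - ξ₁))) ^ 2) ^ ((1:ℝ)/2)
      ≤ (∑' ξ : ℤ, (c2 * (F ξ + G ξ)) ^ 2) ^ ((1:ℝ)/2) := by
        refine ENNReal.rpow_le_rpow ?_ (by norm_num)
        refine Summable.tsum_le_tsum (fun ξ => ?_) ENNReal.summable ENNReal.summable
        exact pow_le_pow_left' (hP ξ) 2
    _ = c2 * (∑' ξ : ℤ, (F ξ + G ξ) ^ 2) ^ ((1:ℝ)/2) := by
        have : ∀ ξ : ℤ, (c2 * (F ξ + G ξ)) ^ 2 = c2 ^ 2 * (F ξ + G ξ) ^ 2 :=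
          fun ξ => mul_pow _ _ _
        rw [tsum_congr this, ENNReal.tsum_mul_left,
          ENNReal.mul_rpow_of_nonneg _ _ (by norm_num : (0:ℝ) ≤ 1/2), esq_half]
    _ ≤ c2 * ((∑' ξ, F ξ ^ 2) ^ ((1:ℝ)/2) + (∑' ξ, G ξ ^ 2) ^ ((1:ℝ)/2)) :=
        mul_le_mul_right (emink F G) _
    _ ≤ c2 * ((S0e * ((∑' t, a t ^ 2) * (∑' t, b t ^ 2))) ^ ((1:ℝ)/2)
          + (S0e * ((∑' t, a t ^ 2) * (∑' t, b t ^ 2))) ^ ((1:ℝ)/2)) := by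
        refine mul_le_mul_right (add_le_add ?_ ?_) _
        · exact ENNReal.rpow_le_rpow (Fbound a b) (by norm_num)
        · exact ENNReal.rpow_le_rpow (Gbound a b) (by norm_num)
    _ = c2 * 2 * S0e ^ ((1:ℝ)/2)
          * ((∑' t, a t ^ 2) ^ ((1:ℝ)/2) * (∑' t, b t ^ 2) ^ ((1:ℝ)/2)) := by
        rw [ENNReal.mul_rpow_of_nonneg _ _ (by norm_num : (0:ℝ) ≤ 1/2),
          ENNReal.mul_rpow_of_nonneg _ _ (by norm_num : (0:ℝ) ≤ 1/2)]
        ring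

lemma S0sum : Summable (fun ξ : ℤ => (1 + (ξ:ℝ)^2)⁻¹) := by
  have base : Summable (fun n : ℕ => 1 / (n:ℝ)^2) := by
    exact_mod_cast Real.summable_one_div_nat_pow.2 one_lt_two
  have base1 : Summable (fun n : ℕ => 1 / ((n:ℝ)+1)^2) := by
    have := (summable_nat_add_iff (f := fun n : ℕ => 1 / (n:ℝ)^2) 1).2 base
    simpa using this
  have hnat : Summable (fun n : ℕ => (1 + (n:ℝ)^2)⁻¹) := by
    refine Summable.of_nonneg_of_le (fun n => by positivity) (fun n => ?_) (base1.mul_left 2)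
    have h1 : ((n:ℝ)+1)^2 ≤ 2*(1+(n:ℝ)^2) := by nlinarith [sq_nonneg ((n:ℝ)-1)]
    rw [inv_eq_one_div, mul_one_div, div_le_div_iff₀ (by positivity) (by positivity)]
    nlinarith [h1]
  refine Summable.of_nat_of_neg ?_ ?_
  · simpa using hnat
  · simpa using hnat

lemma S0e_eq : S0e = ENNReal.ofReal (∑' ξ : ℤ, (1 + (ξ:ℝ)^2)⁻¹) := by
  rw [ENNReal.ofReal_tsum_of_nonneg (fun ξ => by positivity) S0sum]
  refine tsum_congr fun ξ => ?_
  have hpos : (0:ℝ) < 1 + (ξ:ℝ)^2 := by positivity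
  calc (Ja ξ)⁻¹ ^ 2 = ((Ja ξ) ^ 2)⁻¹ := ENNReal.inv_pow.symm
    _ = (ENNReal.ofReal (1 + (ξ:ℝ)^2))⁻¹ := by
        rw [Ja, ← ENNReal.ofReal_pow (jap_nonneg ξ), jap_sq]
    _ = ENNReal.ofReal ((1 + (ξ:ℝ)^2)⁻¹) := (ENNReal.ofReal_inv_of_pos hpos).symm

lemma S0e_ne_top : S0e ≠ ⊤ := by rw [S0e_eq]; exact ENNReal.ofReal_ne_top

lemma enn_norm_tsum_le (f : ℤ → ℂ) :
    (‖∑' i, f i‖₊ : ENNReal) ≤ ∑' i, (‖f i‖₊ : ENNReal) := by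
  by_cases hf : Summable (fun i => ‖f i‖₊)
  · calc (‖∑' i, f i‖₊ : ENNReal) ≤ ((∑' i, ‖f i‖₊ : NNReal) : ENNReal) :=
        ENNReal.coe_le_coe.2 (nnnorm_tsum_le hf)
      _ = ∑' i, (‖f i‖₊ : ENNReal) := ENNReal.coe_tsum hf
  · have htop : ∑' i, (‖f i‖₊ : ENNReal) = ⊤ := by
      by_contra hc
      exact hf (ENNReal.tsum_coe_ne_top_iff_summable.1 hc)
    rw [htop]; exact le_top

/-- The `ℓ²`-convolution bound: for `u, v ∈ ℓ²(ℤ)`,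
`‖ ∑_{ξ₁+ξ₂=ξ} ⟨ξ₂⟩^{1/2} / (⟨ξ⟩ ⟨ξ₁⟩^{1/2}) u(ξ₁) v(ξ₂) ‖_{ℓ²_ξ} ≤ C ‖u‖_{ℓ²} ‖v‖_{ℓ²}`
for an absolute constant `C > 0`. -/
theorem stmt1 : ∃ C > 0, ∀ u v : ℤ → ℂ,
    Summable (fun ξ : ℤ => ‖u ξ‖ ^ 2) → Summable (fun ξ : ℤ => ‖v ξ‖ ^ 2) →
    (∑' ξ : ℤ, ‖∑' ξ₁ : ℤ,
        ((jap (ξ - ξ₁) ^ ((1:ℝ)/2) / (jap ξ * jap ξ₁ ^ ((1:ℝ)/2)) : ℝ) : ℂ)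
          * u ξ₁ * v (ξ - ξ₁)‖ ^ 2) ^ ((1:ℝ)/2)
      ≤ C * (∑' ξ : ℤ, ‖u ξ‖ ^ 2) ^ ((1:ℝ)/2) * (∑' ξ : ℤ, ‖v ξ‖ ^ 2) ^ ((1:ℝ)/2) := by
  have hS0rpos : 0 < ∑' ξ : ℤ, (1 + (ξ:ℝ)^2)⁻¹ := by
    have h0 : ((1:ℝ) + ((0:ℤ):ℝ)^2)⁻¹ ≤ ∑' ξ : ℤ, (1 + (ξ:ℝ)^2)⁻¹ :=
      Summable.le_tsum S0sum 0 (fun b _ => by positivity)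
    norm_num at h0
    linarith
  refine ⟨Real.sqrt 2 * 2 * Real.sqrt (∑' ξ : ℤ, (1 + (ξ:ℝ)^2)⁻¹),
    mul_pos (mul_pos (Real.sqrt_pos.2 two_pos) two_pos) (Real.sqrt_pos.2 hS0rpos), ?_⟩
  intro u v hu hv
  set T : ℤ → ℂ := fun ξ => ∑' ξ₁ : ℤ,
      ((jap (ξ - ξ₁) ^ ((1:ℝ)/2) / (jap ξ * jap ξ₁ ^ ((1:ℝ)/2)) : ℝ) : ℂ)
        * u ξ₁ * v (ξ - ξ₁) with hT
  have hmr : ∀ ξ ξ₁ : ℤ, jap (ξ - ξ₁) ^ ((1:ℝ)/2) / (jap ξ * jap ξ₁ ^ ((1:ℝ)/2))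
      = Real.sqrt (jap (ξ - ξ₁)) / (jap ξ * Real.sqrt (jap ξ₁)) := by
    intro ξ ξ₁; rw [Real.sqrt_eq_rpow, Real.sqrt_eq_rpow]
  have hterm : ∀ ξ ξ₁ : ℤ,
      (‖((jap (ξ - ξ₁) ^ ((1:ℝ)/2) / (jap ξ * jap ξ₁ ^ ((1:ℝ)/2)) : ℝ) : ℂ)
        * u ξ₁ * v (ξ - ξ₁)‖₊ : ENNReal)
      = ENNReal.ofReal (Real.sqrt (jap (ξ - ξ₁)) / (jap ξ * Real.sqrt (jap ξ₁)))
          * ((‖u ξ₁‖₊ : ENNReal) * (‖v (ξ - ξ₁)‖₊ : ENNReal)) := by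
    intro ξ ξ₁
    have hnn : 0 ≤ Real.sqrt (jap (ξ - ξ₁)) / (jap ξ * Real.sqrt (jap ξ₁)) :=
      div_nonneg (Real.sqrt_nonneg _) (mul_nonneg (jap_nonneg _) (Real.sqrt_nonneg _))
    rw [hmr, nnnorm_mul, nnnorm_mul, Complex.nnnorm_real, ENNReal.coe_mul, ENNReal.coe_mul,
      ← enorm_eq_nnnorm, ← ofReal_norm
        (Real.sqrt (jap (ξ - ξ₁)) / (jap ξ * Real.sqrt (jap ξ₁))),
      Real.norm_of_nonneg hnn, mul_assoc]
  -- the main ENNReal estimate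
  have hE : (∑' ξ : ℤ, ((‖T ξ‖₊ : ENNReal)) ^ 2) ^ ((1:ℝ)/2)
      ≤ ENNReal.ofReal (Real.sqrt 2) * 2 * S0e ^ ((1:ℝ)/2)
          * ((∑' ξ : ℤ, ((‖u ξ‖₊ : ENNReal)) ^ 2) ^ ((1:ℝ)/2)
            * (∑' ξ : ℤ, ((‖v ξ‖₊ : ENNReal)) ^ 2) ^ ((1:ℝ)/2)) := by
    refine le_trans ?_
      (keybound (fun ξ => (‖u ξ‖₊ : ENNReal)) (fun ξ => (‖v ξ‖₊ : ENNReal)))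
    refine ENNReal.rpow_le_rpow ?_ (by norm_num)
    refine Summable.tsum_le_tsum (fun ξ => ?_) ENNReal.summable ENNReal.summable
    refine pow_le_pow_left' ?_ 2
    calc (‖T ξ‖₊ : ENNReal)
        ≤ ∑' ξ₁ : ℤ, (‖((jap (ξ - ξ₁) ^ ((1:ℝ)/2) / (jap ξ * jap ξ₁ ^ ((1:ℝ)/2)) : ℝ) : ℂ)
            * u ξ₁ * v (ξ - ξ₁)‖₊ : ENNReal) := enn_norm_tsum_le _
      _ = _ := tsum_congr (hterm ξ)
  -- identify ofReal forms
  have hYu : ENNReal.ofReal (∑' ξ : ℤ, ‖u ξ‖ ^ 2) = ∑' ξ : ℤ, ((‖u ξ‖₊ : ENNReal)) ^ 2 := by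
    rw [ENNReal.ofReal_tsum_of_nonneg (fun ξ => sq_nonneg _) hu]
    exact tsum_congr fun ξ => by
      rw [ENNReal.ofReal_pow (norm_nonneg _), ofReal_norm, enorm_eq_nnnorm]
  have hYv : ENNReal.ofReal (∑' ξ : ℤ, ‖v ξ‖ ^ 2) = ∑' ξ : ℤ, ((‖v ξ‖₊ : ENNReal)) ^ 2 := by
    rw [ENNReal.ofReal_tsum_of_nonneg (fun ξ => sq_nonneg _) hv]
    exact tsum_congr fun ξ => by
      rw [ENNReal.ofReal_pow (norm_nonneg _), ofReal_norm, enorm_eq_nnnorm]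
  -- finiteness of the RHS
  have hRHSne : ENNReal.ofReal (Real.sqrt 2) * 2 * S0e ^ ((1:ℝ)/2)
      * ((∑' ξ : ℤ, ((‖u ξ‖₊ : ENNReal)) ^ 2) ^ ((1:ℝ)/2)
        * (∑' ξ : ℤ, ((‖v ξ‖₊ : ENNReal)) ^ 2) ^ ((1:ℝ)/2)) ≠ ⊤ := by
    exact ENNReal.mul_ne_top
      (ENNReal.mul_ne_top
        (ENNReal.mul_ne_top ENNReal.ofReal_ne_top (by norm_num))
        (ENNReal.rpow_ne_top_of_nonneg (by norm_num) S0e_ne_top))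
      (ENNReal.mul_ne_top
        (ENNReal.rpow_ne_top_of_nonneg (by norm_num)
          (by rw [← hYu]; exact ENNReal.ofReal_ne_top))
        (ENNReal.rpow_ne_top_of_nonneg (by norm_num)
          (by rw [← hYv]; exact ENNReal.ofReal_ne_top)))
  -- summability of the LHS
  have hEne : (∑' ξ : ℤ, ((‖T ξ‖₊ : ENNReal)) ^ 2) ≠ ⊤ := by
    intro h
    rw [h, ENNReal.top_rpow_of_pos (by norm_num)] at hE
    exact hRHSne (top_le_iff.1 hE)
  have hsumN : Summable (fun ξ : ℤ => (‖T ξ‖₊ ^ 2 : NNReal)) := by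
    apply ENNReal.tsum_coe_ne_top_iff_summable.1
    have hco : (∑' ξ : ℤ, ((‖T ξ‖₊ ^ 2 : NNReal) : ENNReal))
        = ∑' ξ : ℤ, ((‖T ξ‖₊ : ENNReal)) ^ 2 :=
      tsum_congr fun ξ => by push_cast; ring
    rw [hco]
    exact hEne
  have hXsum : Summable (fun ξ : ℤ => ‖T ξ‖ ^ 2) := by
    have := NNReal.summable_coe.2 hsumN
    simpa [NNReal.coe_pow, coe_nnnorm] using this
  have hXeq : ENNReal.ofReal (∑' ξ : ℤ, ‖T ξ‖ ^ 2) = ∑' ξ : ℤ, ((‖T ξ‖₊ : ENNReal)) ^ 2 := by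
    rw [ENNReal.ofReal_tsum_of_nonneg (fun ξ => sq_nonneg _) hXsum]
    exact tsum_congr fun ξ => by
      rw [ENNReal.ofReal_pow (norm_nonneg _), ofReal_norm, enorm_eq_nnnorm]
  -- final conversion to real numbers
  have hXnn : 0 ≤ ∑' ξ : ℤ, ‖T ξ‖ ^ 2 := tsum_nonneg (fun ξ => sq_nonneg _)
  have hYunn : 0 ≤ ∑' ξ : ℤ, ‖u ξ‖ ^ 2 := tsum_nonneg (fun ξ => sq_nonneg _)
  have hYvnn : 0 ≤ ∑' ξ : ℤ, ‖v ξ‖ ^ 2 := tsum_nonneg (fun ξ => sq_nonneg _)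
  have hRHSnn : 0 ≤ Real.sqrt 2 * 2 * Real.sqrt (∑' ξ : ℤ, (1 + (ξ:ℝ)^2)⁻¹)
      * (∑' ξ : ℤ, ‖u ξ‖ ^ 2) ^ ((1:ℝ)/2) * (∑' ξ : ℤ, ‖v ξ‖ ^ 2) ^ ((1:ℝ)/2) := by
    have h1 : 0 ≤ (∑' ξ : ℤ, ‖u ξ‖ ^ 2) ^ ((1:ℝ)/2) := Real.rpow_nonneg hYunn _
    have h2 : 0 ≤ (∑' ξ : ℤ, ‖v ξ‖ ^ 2) ^ ((1:ℝ)/2) := Real.rpow_nonneg hYvnn _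
    positivity
  refine (ENNReal.ofReal_le_ofReal_iff hRHSnn).1 ?_
  calc ENNReal.ofReal ((∑' ξ : ℤ, ‖T ξ‖ ^ 2) ^ ((1:ℝ)/2))
      = (ENNReal.ofReal (∑' ξ : ℤ, ‖T ξ‖ ^ 2)) ^ ((1:ℝ)/2) :=
        (ENNReal.ofReal_rpow_of_nonneg hXnn (by norm_num)).symm
    _ = (∑' ξ : ℤ, ((‖T ξ‖₊ : ENNReal)) ^ 2) ^ ((1:ℝ)/2) := by rw [hXeq]
    _ ≤ ENNReal.ofReal (Real.sqrt 2) * 2 * S0e ^ ((1:ℝ)/2)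
          * ((∑' ξ : ℤ, ((‖u ξ‖₊ : ENNReal)) ^ 2) ^ ((1:ℝ)/2)
            * (∑' ξ : ℤ, ((‖v ξ‖₊ : ENNReal)) ^ 2) ^ ((1:ℝ)/2)) := hE
    _ = ENNReal.ofReal (Real.sqrt 2 * 2 * Real.sqrt (∑' ξ : ℤ, (1 + (ξ:ℝ)^2)⁻¹)
          * ((∑' ξ : ℤ, ‖u ξ‖ ^ 2) ^ ((1:ℝ)/2) * (∑' ξ : ℤ, ‖v ξ‖ ^ 2) ^ ((1:ℝ)/2))) := by
        rw [← hYu, ← hYv, S0e_eq,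
          ENNReal.ofReal_rpow_of_nonneg (le_of_lt hS0rpos) (by norm_num),
          ENNReal.ofReal_rpow_of_nonneg hYunn (by norm_num),
          ENNReal.ofReal_rpow_of_nonneg hYvnn (by norm_num),
          Real.sqrt_eq_rpow (∑' ξ : ℤ, (1 + (ξ:ℝ)^2)⁻¹)]
        rw [show (2 : ENNReal) = ENNReal.ofReal 2 by norm_num]
        rw [← ENNReal.ofReal_mul (Real.sqrt_nonneg 2),
          ← ENNReal.ofReal_mul (by positivity : (0:ℝ) ≤ Real.sqrt 2 * 2),
          ← ENNReal.ofReal_mul (Real.rpow_nonneg hYunn _),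
          ← ENNReal.ofReal_mul
            (mul_nonneg (by positivity : (0:ℝ) ≤ Real.sqrt 2 * 2)
              (Real.rpow_nonneg (le_of_lt hS0rpos) _))]
    _ ≤ _ := ENNReal.ofReal_le_ofReal (le_of_eq (by ring))
end

section
/- Let $\mathcal{T}_h$ be the Fourier multiplier on mean-zero functions on the circle $\mathbb{T} = \mathbb{R}/2\pi\mathbb{Z}$ with symbol $-i\coth(h\xi)$ for $\xi \ne 0$ (and symbol $0$ at $\xi = 0$), and let $\mathbf{P}_{\ne 0}$ denote the projection onto mean-zero functions. Then for smooth real-valued mean-zero functions $g, k$ on $\mathbb{T}$, the Cotlar-type identity holds: $\mathcal{T}_h\big[ g\, \mathcal{T}_h k + k\, \mathcal{T}_h g \big] = \mathbf{P}_{\ne 0}\big[ \mathcal{T}_h g \cdot \mathcal{T}_h k - g\, k \big]$. -/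
open Complex

/-- Hyperbolic cotangent `coth x = cosh x / sinh x` (for `x ≠ 0`). -/
noncomputable def coth (x : ℝ) : ℝ := Real.cosh x / Real.sinh x

/-- The Fourier symbol of the operator `𝒯_h` on the circle:
`-i coth(h ξ)` for `ξ ≠ 0`, and `0` at `ξ = 0`. -/
noncomputable def Tsymb (h : ℝ) (ξ : ℤ) : ℂ :=
  if ξ = 0 then 0 else -Complex.I * (coth (h * ξ) : ℂ)

/-- The operator `𝒯_h` acting on Fourier coefficient sequences. -/
noncomputable def Th (h : ℝ) (a : ℤ → ℂ) (ξ : ℤ) : ℂ := Tsymb h ξ * a ξ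

/-- Convolution of Fourier coefficient sequences (corresponding to the pointwise
product of the underlying functions, up to the fixed normalizing constant). -/
noncomputable def conv (a b : ℤ → ℂ) (ξ : ℤ) : ℂ := ∑' η : ℤ, a η * b (ξ - η)

lemma coth_pos {x : ℝ} (hx : 0 < x) : 0 < coth x :=
  div_pos (Real.cosh_pos _) (Real.sinh_pos_iff.mpr hx)

lemma coth_neg (x : ℝ) : coth (-x) = -coth x := by
  simp [coth, Real.sinh_neg, Real.cosh_neg, div_neg]

lemma coth_anti {x y : ℝ} (hx : 0 < x) (hxy : x ≤ y) : coth y ≤ coth x := by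
  unfold coth
  rw [div_le_div_iff₀ (Real.sinh_pos_iff.mpr (lt_of_lt_of_le hx hxy)) (Real.sinh_pos_iff.mpr hx)]
  have h0 : 0 ≤ Real.sinh (y - x) := by
    rcases eq_or_lt_of_le hxy with h | h
    · simp [← h]
    · exact le_of_lt (Real.sinh_pos_iff.mpr (by linarith))
  rw [Real.sinh_sub] at h0
  nlinarith

lemma coth_add_identity {x y : ℝ} (hx : x ≠ 0) (hy : y ≠ 0) (hxy : x + y ≠ 0) :
    coth (x + y) * (coth x + coth y) = coth x * coth y + 1 := by
  unfold coth
  have sx := Real.sinh_ne_zero.mpr hx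
  have sy := Real.sinh_ne_zero.mpr hy
  have sxy := Real.sinh_ne_zero.mpr hxy
  field_simp
  rw [Real.cosh_add, Real.sinh_add]
  ring

lemma Tsymb_norm_le {h : ℝ} (hh : 0 < h) (ξ : ℤ) : ‖Tsymb h ξ‖ ≤ coth h := by
  unfold Tsymb
  split
  · simpa using (coth_pos hh).le
  · rename_i hξ
    rw [norm_mul]
    simp only [norm_neg, Complex.norm_I, one_mul, Complex.norm_real, Real.norm_eq_abs]
    have key : ∀ n : ℤ, 1 ≤ n → |coth (h * n)| ≤ coth h := by
      intro n hn
      have h1 : (1 : ℝ) ≤ (n : ℝ) := by exact_mod_cast hn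
      have hpos : 0 < h * n := by nlinarith
      rw [abs_of_pos (coth_pos hpos)]
      exact coth_anti hh (by nlinarith)
    rcases lt_or_gt_of_ne hξ with hneg | hpos
    · have : h * (ξ : ℝ) = -(h * ((-ξ : ℤ) : ℝ)) := by push_cast; ring
      rw [this, coth_neg, abs_neg]
      exact key (-ξ) (by omega)
    · exact key ξ (by omega)

lemma summable_base : Summable (fun η : ℤ => 1 / (1 + |(η : ℝ)|) ^ 2) := by
  have hnat : Summable (fun n : ℕ => 1 / (1 + (n : ℝ)) ^ 2) := by
    have := (summable_nat_add_iff 1).mpr (Real.summable_one_div_nat_pow.mpr one_lt_two)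
    refine this.congr fun n => ?_
    push_cast
    ring_nf
  apply Summable.of_nat_of_neg
  · exact hnat.congr fun n => by simp
  · exact hnat.congr fun n => by simp

lemma summable_conv {u v : ℤ → ℂ} {C D : ℝ} (hD : 0 ≤ D)
    (hu : ∀ η, ‖u η‖ ≤ C / (1 + |(η : ℝ)|) ^ 2) (hv : ∀ η, ‖v η‖ ≤ D) (ξ : ℤ) :
    Summable (fun η => u η * v (ξ - η)) := by
  have hC : 0 ≤ C := by
    have := (norm_nonneg (u 0)).trans (hu 0)
    simpa using this
  apply Summable.of_norm_bounded (g := fun η : ℤ => D * (C * (1 / (1 + |(η : ℝ)|) ^ 2)))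
    ((summable_base.mul_left C).mul_left D)
  intro η
  rw [norm_mul]
  have h1 : ‖u η‖ * ‖v (ξ - η)‖ ≤ (C / (1 + |(η : ℝ)|) ^ 2) * D :=
    mul_le_mul (hu η) (hv _) (norm_nonneg _) (div_nonneg hC (by positivity))
  calc ‖u η‖ * ‖v (ξ - η)‖ ≤ (C / (1 + |(η : ℝ)|) ^ 2) * D := h1
    _ = D * (C * (1 / (1 + |(η : ℝ)|) ^ 2)) := by ring

/-- Cotlar-type identity for `𝒯_h` on the circle, stated on the Fourier side:
if `g, k` are smooth real-valued mean-zero functions on `𝕋` with Fourier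
coefficients `a, b` (real-valuedness: `conj (a ξ) = a (-ξ)`; mean-zero:
`a 0 = 0`; smoothness: rapid decay of coefficients), then
`𝒯_h [g 𝒯_h k + k 𝒯_h g] = P_{≠0}[𝒯_h g · 𝒯_h k − g k]`. -/
theorem stmt3 (h : ℝ) (hh : 0 < h) (a b : ℤ → ℂ)
    (ha0 : a 0 = 0) (hb0 : b 0 = 0)
    (haR : ∀ ξ : ℤ, (starRingEnd ℂ) (a ξ) = a (-ξ))
    (hbR : ∀ ξ : ℤ, (starRingEnd ℂ) (b ξ) = b (-ξ))
    (haS : ∀ n : ℕ, ∃ C : ℝ, ∀ ξ : ℤ, ‖a ξ‖ ≤ C / (1 + |(ξ : ℝ)|) ^ n)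
    (hbS : ∀ n : ℕ, ∃ C : ℝ, ∀ ξ : ℤ, ‖b ξ‖ ≤ C / (1 + |(ξ : ℝ)|) ^ n) :
    ∀ ξ : ℤ, Th h (fun η => conv a (Th h b) η + conv b (Th h a) η) ξ
      = if ξ = 0 then 0 else conv (Th h a) (Th h b) ξ - conv a b ξ := by
  intro ξ
  obtain ⟨Ca, hCa⟩ := haS 2
  obtain ⟨Cb, hCb⟩ := hbS 2
  obtain ⟨Db, hDb⟩ := hbS 0
  have hcoth : 0 < coth h := coth_pos hh
  have hbB : ∀ η, ‖b η‖ ≤ Db := by intro η; simpa using hDb η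
  have hDb0 : 0 ≤ Db := (norm_nonneg _).trans (hbB 0)
  have hTa2 : ∀ η, ‖Th h a η‖ ≤ (coth h * Ca) / (1 + |(η : ℝ)|) ^ 2 := by
    intro η
    rw [Th, norm_mul, mul_div_assoc]
    exact mul_le_mul (Tsymb_norm_le hh η) (hCa η) (norm_nonneg _) hcoth.le
  have hTbB : ∀ η, ‖Th h b η‖ ≤ coth h * Db := by
    intro η
    rw [Th, norm_mul]
    exact mul_le_mul (Tsymb_norm_le hh η) (hbB η) (norm_nonneg _) hcoth.le
  have s1 : Summable (fun η => a η * Th h b (ξ - η)) :=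
    summable_conv (by positivity) hCa hTbB ξ
  have s2 : Summable (fun η => Th h a η * b (ξ - η)) :=
    summable_conv hDb0 hTa2 hbB ξ
  have s2' : Summable (fun η => b (ξ - η) * Th h a η) := by
    simpa [mul_comm] using s2
  have s3 : Summable (fun η => Th h a η * Th h b (ξ - η)) :=
    summable_conv (by positivity) hTa2 hTbB ξ
  have s4 : Summable (fun η => a η * b (ξ - η)) :=
    summable_conv hDb0 hCa hbB ξ
  by_cases hξ : ξ = 0
  · simp [hξ, Th, Tsymb]
  rw [if_neg hξ]
  have reidx : conv b (Th h a) ξ = ∑' η, b (ξ - η) * Th h a η := by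
    have := (Equiv.subLeft ξ).tsum_eq (fun t => b (ξ - t) * Th h a t)
    simp only [Equiv.subLeft_apply, sub_sub_cancel] at this
    unfold conv; exact this
  have key : ∀ η : ℤ, Tsymb h ξ * (a η * Th h b (ξ - η) + b (ξ - η) * Th h a η)
      = Th h a η * Th h b (ξ - η) - a η * b (ξ - η) := by
    intro η
    by_cases hη : η = 0
    · simp [hη, ha0, Th]
    by_cases hμ : ξ - η = 0
    · simp [hμ, hb0, Th]
    have hx : h * (η : ℝ) ≠ 0 := by
      have : (η : ℝ) ≠ 0 := Int.cast_ne_zero.mpr hη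
      positivity
    have hy : h * ((ξ - η : ℤ) : ℝ) ≠ 0 := by
      have : ((ξ - η : ℤ) : ℝ) ≠ 0 := Int.cast_ne_zero.mpr hμ
      positivity
    have hxy : h * (η : ℝ) + h * ((ξ - η : ℤ) : ℝ) ≠ 0 := by
      have h1 : h * (η : ℝ) + h * ((ξ - η : ℤ) : ℝ) = h * (ξ : ℝ) := by push_cast; ring
      rw [h1]
      have : (ξ : ℝ) ≠ 0 := Int.cast_ne_zero.mpr hξ
      positivity
    have hreal := coth_add_identity hx hy hxy
    have hsum : h * (η : ℝ) + h * ((ξ - η : ℤ) : ℝ) = h * (ξ : ℝ) := by push_cast; ring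
    rw [hsum] at hreal
    have kc : ((coth (h * (ξ : ℝ)) : ℂ)) * ((coth (h * (η : ℝ)) : ℂ) + (coth (h * ((ξ - η : ℤ) : ℝ)) : ℂ))
        = (coth (h * (η : ℝ)) : ℂ) * (coth (h * ((ξ - η : ℤ) : ℝ)) : ℂ) + 1 := by
      exact_mod_cast hreal
    simp only [Th, Tsymb, if_neg hξ, if_neg hη, if_neg hμ]
    have hI : (Complex.I) ^ 2 = -1 := Complex.I_sq
    linear_combination (Complex.I ^ 2 * (a η * b (ξ - η))) * kc + (a η * b (ξ - η)) * hI
  calc Th h (fun η => conv a (Th h b) η + conv b (Th h a) η) ξ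
      = Tsymb h ξ * (∑' η, a η * Th h b (ξ - η) + ∑' η, b (ξ - η) * Th h a η) := by
        rw [Th, reidx]; rfl
    _ = Tsymb h ξ * ∑' η, (a η * Th h b (ξ - η) + b (ξ - η) * Th h a η) := by
        rw [Summable.tsum_add s1 s2']
    _ = ∑' η, Tsymb h ξ * (a η * Th h b (ξ - η) + b (ξ - η) * Th h a η) := by
        rw [tsum_mul_left]
    _ = ∑' η, (Th h a η * Th h b (ξ - η) - a η * b (ξ - η)) := tsum_congr key
    _ = conv (Th h a) (Th h b) ξ - conv a b ξ := Summable.tsum_sub s3 s4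
end

section
/- More generally, for every $s_1 \le s_2$ and $0 < h < \infty$, the operator $\mathcal{G}_h = (\mathcal{H}-\mathcal{T}_h)\partial_x$ maps $H^{s_1}(\mathbb{T})$ boundedly into $H^{s_2}(\mathbb{T})$: there exists $C = C(s_1, s_2, h) > 0$ such that $\|\mathcal{G}_h f\|_{H^{s_2}(\mathbb{T})} \le C \|f\|_{H^{s_1}(\mathbb{T})}$ for all $f \in H^{s_1}(\mathbb{T})$. -/
open Complex

/-- The Fourier symbol of `𝒢_h = (ℋ - 𝒯_h) ∂_x`:
`m_h(ξ) = iξ (-i sgn ξ + i coth(h ξ))` for `ξ ≠ 0`, and `m_h(0) = 0`. -/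
noncomputable def Gsymb (h : ℝ) (ξ : ℤ) : ℂ :=
  if ξ = 0 then 0
  else Complex.I * (ξ : ℂ) *
    (-Complex.I * ((Int.sign ξ : ℤ) : ℂ) + Complex.I * (coth (h * ξ) : ℂ))

lemma coth_sub_one {y : ℝ} (hy : 0 < y) :
    coth y - 1 = 2 / (Real.exp (2 * y) - 1) := by
  have hs : 0 < Real.sinh y := Real.sinh_pos_iff.2 hy
  have h1 : Real.cosh y - Real.sinh y = Real.exp (-y) := Real.cosh_sub_sinh y
  have h2 : Real.sinh y = (Real.exp y - Real.exp (-y)) / 2 := Real.sinh_eq y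
  have h3 : Real.exp (-y) * Real.exp (2 * y) = Real.exp y := by
    rw [← Real.exp_add]; ring_nf
  have hd : Real.exp (2 * y) - 1 > 0 := by
    have : (1:ℝ) < Real.exp (2*y) := Real.one_lt_exp_iff.2 (by linarith)
    linarith
  rw [coth, div_sub_one hs.ne', h1, h2, div_eq_div_iff (by linarith) hd.ne']
  nlinarith [h3]

lemma coth_gt_one {y : ℝ} (hy : 0 < y) : 1 < coth y := by
  have hs : 0 < Real.sinh y := Real.sinh_pos_iff.2 hy
  have h1 : Real.cosh y - Real.sinh y = Real.exp (-y) := Real.cosh_sub_sinh y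
  have := Real.exp_pos (-y)
  rw [coth, lt_div_iff₀ hs]
  linarith

lemma norm_Gsymb {h : ℝ} (hh : 0 < h) {ξ : ℤ} (hξ : ξ ≠ 0) :
    ‖Gsymb h ξ‖ = |(ξ:ℝ)| * (coth (h * |(ξ:ℝ)|) - 1) := by
  rcases lt_or_gt_of_ne hξ with hneg | hpos
  · have hsign : Int.sign ξ = -1 := Int.sign_eq_neg_one_of_neg hneg
    have habs : |(ξ:ℝ)| = -(ξ:ℝ) := abs_of_neg (by exact_mod_cast hneg)
    have hcoth : coth (h * |(ξ:ℝ)|) = -coth (h * (ξ:ℝ)) := by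
      rw [habs, mul_neg, coth_neg]
    have hG : Gsymb h ξ = (((ξ:ℝ) * (-1 - coth (h * (ξ:ℝ))) : ℝ) : ℂ) := by
      rw [Gsymb, if_neg hξ, hsign]
      push_cast
      ring_nf
      rw [Complex.I_sq]
      ring
    rw [hG, Complex.norm_real, Real.norm_eq_abs, hcoth]
    rw [abs_mul, habs]
    have h1 : 1 < coth (h * -(ξ:ℝ)) := coth_gt_one (by
      have : (0:ℝ) < -(ξ:ℝ) := by exact_mod_cast neg_pos.2 hneg
      positivity)
    rw [mul_neg, coth_neg] at h1
    rw [_root_.abs_of_nonneg (by linarith)]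
    ring
  · have hsign : Int.sign ξ = 1 := Int.sign_eq_one_of_pos hpos
    have habs : |(ξ:ℝ)| = (ξ:ℝ) := abs_of_pos (by exact_mod_cast hpos)
    have hG : Gsymb h ξ = (((ξ:ℝ) * (1 - coth (h * (ξ:ℝ))) : ℝ) : ℂ) := by
      rw [Gsymb, if_neg hξ, hsign]
      push_cast
      ring_nf
      rw [Complex.I_sq]
      ring
    rw [hG, Complex.norm_real, Real.norm_eq_abs, habs]
    have h1 : 1 < coth (h * (ξ:ℝ)) := coth_gt_one (by
      have : (0:ℝ) < (ξ:ℝ) := by exact_mod_cast hpos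
      positivity)
    rw [abs_mul, abs_of_pos (by exact_mod_cast hpos), abs_of_nonpos (by linarith)]
    ring

lemma Gsymb_le {h : ℝ} (hh : 0 < h) {ξ : ℤ} (hξ : ξ ≠ 0) :
    ‖Gsymb h ξ‖ ≤ 2 / (Real.exp h - 1) * (|(ξ:ℝ)| * Real.exp (-(h * |(ξ:ℝ)|))) := by
  set x := |(ξ:ℝ)| with hxdef
  have hx1 : (1:ℝ) ≤ x := by
    rw [hxdef, ← Int.cast_abs]
    exact_mod_cast Int.one_le_abs (by omega)
  have hx0 : (0:ℝ) < x := by linarith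
  have hhx : 0 < h * x := by positivity
  have hc : coth (h * x) - 1 = 2 / (Real.exp (2 * (h * x)) - 1) := coth_sub_one hhx
  have he1 : (1:ℝ) < Real.exp h := Real.one_lt_exp_iff.2 hh
  have e1 : Real.exp (2 * (h * x)) = Real.exp (h * x) * Real.exp (h * x) := by
    rw [← Real.exp_add]; ring_nf
  have e2 : Real.exp h ≤ Real.exp (h * x) := Real.exp_le_exp.2 (by nlinarith)
  have e3 : (1:ℝ) ≤ Real.exp (h * x) := Real.one_le_exp (le_of_lt hhx)
  have hden : (Real.exp h - 1) * Real.exp (h * x) ≤ Real.exp (2 * (h * x)) - 1 := by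
    nlinarith
  have hdpos : (0:ℝ) < (Real.exp h - 1) * Real.exp (h * x) := by
    have := Real.exp_pos (h * x); nlinarith
  have hstep : coth (h * x) - 1 ≤ 2 / (Real.exp h - 1) * Real.exp (-(h * x)) := by
    rw [hc]
    calc 2 / (Real.exp (2 * (h * x)) - 1)
        ≤ 2 / ((Real.exp h - 1) * Real.exp (h * x)) := by
          apply div_le_div_of_nonneg_left (by norm_num) hdpos hden
      _ = 2 / (Real.exp h - 1) * Real.exp (-(h * x)) := by
          rw [Real.exp_neg]
          field_simp
  rw [norm_Gsymb hh hξ, ← hxdef]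
  calc x * (coth (h * x) - 1) ≤ x * (2 / (Real.exp h - 1) * Real.exp (-(h * x))) := by
        apply mul_le_mul_of_nonneg_left hstep (le_of_lt hx0)
    _ = 2 / (Real.exp h - 1) * (x * Real.exp (-(h * x))) := by ring

lemma weight_bound {h : ℝ} (hh : 0 < h) {t : ℝ} (ht : 0 ≤ t) (ξ : ℤ) :
    (1 + (ξ:ℝ)^2)^t * ‖Gsymb h ξ‖^2
      ≤ 2^t * (2/(Real.exp h - 1))^2 * (Nat.factorial ⌈2*t+2⌉₊ : ℝ) / (2*h)^(⌈2*t+2⌉₊) := by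
  set N := ⌈2*t+2⌉₊ with hN
  have he1 : (1:ℝ) < Real.exp h := Real.one_lt_exp_iff.2 hh
  have hK : (0:ℝ) ≤ 2/(Real.exp h - 1) := div_nonneg (by norm_num) (by linarith)
  have hB0 : (0:ℝ) ≤ 2^t * (2/(Real.exp h - 1))^2 * (Nat.factorial N : ℝ) / (2*h)^N := by
    apply div_nonneg _ (by positivity)
    exact mul_nonneg (mul_nonneg (Real.rpow_nonneg (by norm_num) t) (sq_nonneg _)) (Nat.cast_nonneg _)
  by_cases hξ : ξ = 0
  · subst hξ
    simp [Gsymb]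
    exact hB0
  · set x := |(ξ:ℝ)| with hxdef
    have hx1 : (1:ℝ) ≤ x := by
      rw [hxdef, ← Int.cast_abs]
      exact_mod_cast Int.one_le_abs (by omega)
    have hx0 : (0:ℝ) < x := by linarith
    have hsq : (ξ:ℝ)^2 = x^2 := (_root_.sq_abs _).symm
    have step1 : (1 + (ξ:ℝ)^2)^t ≤ 2^t * x ^ (2*t : ℝ) := by
      calc (1 + (ξ:ℝ)^2)^t ≤ (2 * x^2)^t := by
            apply Real.rpow_le_rpow (by positivity) (by nlinarith) ht
        _ = 2^t * x ^ (2*t : ℝ) := by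
            rw [Real.mul_rpow (by norm_num) (by positivity), ← Real.rpow_natCast x 2,
              ← Real.rpow_mul (le_of_lt hx0)]
            norm_num [mul_comm]
    have step2 : ‖Gsymb h ξ‖^2 ≤ (2/(Real.exp h - 1))^2 * (x^2 * Real.exp (-(2*h*x))) := by
      have hle := Gsymb_le hh hξ
      rw [← hxdef] at hle
      have h2 : (2 / (Real.exp h - 1) * (x * Real.exp (-(h * x))))^2
          = (2/(Real.exp h - 1))^2 * (x^2 * Real.exp (-(2*h*x))) := by
        have e : Real.exp (-(h*x)) ^ 2 = Real.exp (-(2*h*x)) := by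
          rw [pow_two, ← Real.exp_add]; congr 1; ring
        rw [mul_pow, mul_pow, e]
      rw [← h2]
      exact pow_le_pow_left₀ (norm_nonneg _) hle 2
    have hexp0 : (0:ℝ) ≤ Real.exp (-(2*h*x)) := le_of_lt (Real.exp_pos _)
    have step3 : x ^ (2*t : ℝ) * (x^2 * Real.exp (-(2*h*x))) ≤ (Nat.factorial N : ℝ) / (2*h)^N := by
      have hxpow : x ^ (2*t : ℝ) * x^2 = x ^ (2*t+2 : ℝ) := by
        rw [Real.rpow_add hx0]
        congr 1
        rw [← Real.rpow_natCast x 2]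
        norm_num
      have hxN : x ^ (2*t+2 : ℝ) ≤ x ^ N := by
        rw [← Real.rpow_natCast x N]
        exact Real.rpow_le_rpow_of_exponent_le hx1 (Nat.le_ceil _)
      have hfac := Real.pow_div_factorial_le_exp (2*h*x) (by nlinarith) N
      have hA : (2*h)^N * x^N ≤ (Nat.factorial N : ℝ) * Real.exp (2*h*x) := by
        rw [← mul_pow]
        rw [div_le_iff₀ (by positivity : (0:ℝ) < (Nat.factorial N : ℝ))] at hfac
        linarith [hfac]
      have hfin : x^N * Real.exp (-(2*h*x)) ≤ (Nat.factorial N : ℝ) / (2*h)^N := by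
        rw [Real.exp_neg, ← div_eq_mul_inv, div_le_div_iff₀ (Real.exp_pos _) (by positivity)]
        nlinarith [hA]
      calc x ^ (2*t : ℝ) * (x^2 * Real.exp (-(2*h*x)))
          = x ^ (2*t : ℝ) * x^2 * Real.exp (-(2*h*x)) := by ring
        _ = x ^ (2*t+2 : ℝ) * Real.exp (-(2*h*x)) := by rw [hxpow]
        _ ≤ x ^ N * Real.exp (-(2*h*x)) := by
            exact mul_le_mul_of_nonneg_right hxN hexp0
        _ ≤ (Nat.factorial N : ℝ) / (2*h)^N := hfin
    calc (1 + (ξ:ℝ)^2)^t * ‖Gsymb h ξ‖^2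
        ≤ (2^t * x ^ (2*t : ℝ)) * ((2/(Real.exp h - 1))^2 * (x^2 * Real.exp (-(2*h*x)))) := by
          apply mul_le_mul step1 step2 (by positivity) (by positivity)
      _ = 2^t * (2/(Real.exp h - 1))^2 * (x ^ (2*t : ℝ) * (x^2 * Real.exp (-(2*h*x)))) := by
          ring
      _ ≤ 2^t * (2/(Real.exp h - 1))^2 * ((Nat.factorial N : ℝ) / (2*h)^N) := by
          apply mul_le_mul_of_nonneg_left step3 (by positivity)
      _ = 2^t * (2/(Real.exp h - 1))^2 * (Nat.factorial N : ℝ) / (2*h)^N := by ring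

/-- Smoothing: for every `s₁ ≤ s₂` and `0 < h < ∞`, the operator `𝒢_h` maps
`H^{s₁}(𝕋)` boundedly into `H^{s₂}(𝕋)` (stated on the Fourier side with
`‖f‖_{H^s}² = ∑_ξ (1+ξ²)^s |f̂(ξ)|²`). -/
theorem stmt6 (s₁ s₂ : ℝ) (hs : s₁ ≤ s₂) (h : ℝ) (hh : 0 < h) :
    ∃ C > 0, ∀ a : ℤ → ℂ,
      Summable (fun ξ : ℤ => (1 + (ξ : ℝ) ^ 2) ^ s₁ * ‖a ξ‖ ^ 2) →
      ∑' ξ : ℤ, (1 + (ξ : ℝ) ^ 2) ^ s₂ * ‖Gsymb h ξ * a ξ‖ ^ 2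
        ≤ C ^ 2 * ∑' ξ : ℤ, (1 + (ξ : ℝ) ^ 2) ^ s₁ * ‖a ξ‖ ^ 2 := by
  set t := s₂ - s₁ with htdef
  have ht : 0 ≤ t := by simp [htdef]; linarith
  set B := 2^t * (2/(Real.exp h - 1))^2 * (Nat.factorial ⌈2*t+2⌉₊ : ℝ) / (2*h)^(⌈2*t+2⌉₊)
    with hB
  have hB0 : 0 ≤ B := by
    refine le_trans ?_ (weight_bound hh ht 0)
    positivity
  refine ⟨Real.sqrt B + 1, by positivity, ?_⟩
  intro a ha
  set C := Real.sqrt B + 1 with hCdef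
  have hC2 : B ≤ C^2 := by
    rw [hCdef]
    nlinarith [Real.sq_sqrt hB0, Real.sqrt_nonneg B]
  have key : ∀ ξ : ℤ, (1 + (ξ:ℝ)^2)^s₂ * ‖Gsymb h ξ * a ξ‖^2
      ≤ C^2 * ((1 + (ξ:ℝ)^2)^s₁ * ‖a ξ‖^2) := by
    intro ξ
    have hpos : (0:ℝ) < 1 + (ξ:ℝ)^2 := by positivity
    have hsplit : (1 + (ξ:ℝ)^2)^s₂ = (1 + (ξ:ℝ)^2)^t * (1 + (ξ:ℝ)^2)^s₁ := by
      rw [← Real.rpow_add hpos]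
      congr 1
      rw [htdef]; ring
    have hwB : (1 + (ξ:ℝ)^2)^t * ‖Gsymb h ξ‖^2 ≤ B := by
      rw [hB]; exact weight_bound hh ht ξ
    rw [norm_mul, mul_pow, hsplit]
    calc (1 + (ξ:ℝ)^2)^t * (1 + (ξ:ℝ)^2)^s₁ * (‖Gsymb h ξ‖^2 * ‖a ξ‖^2)
        = ((1 + (ξ:ℝ)^2)^t * ‖Gsymb h ξ‖^2) * ((1 + (ξ:ℝ)^2)^s₁ * ‖a ξ‖^2) := by ring
      _ ≤ B * ((1 + (ξ:ℝ)^2)^s₁ * ‖a ξ‖^2) :=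
          mul_le_mul_of_nonneg_right hwB (by positivity)
      _ ≤ C^2 * ((1 + (ξ:ℝ)^2)^s₁ * ‖a ξ‖^2) :=
          mul_le_mul_of_nonneg_right hC2 (by positivity)
  have hsum2 : Summable (fun ξ : ℤ => C^2 * ((1 + (ξ:ℝ)^2)^s₁ * ‖a ξ‖^2)) := ha.mul_left _
  have hsum1 : Summable (fun ξ : ℤ => (1 + (ξ:ℝ)^2)^s₂ * ‖Gsymb h ξ * a ξ‖^2) :=
    Summable.of_nonneg_of_le (fun ξ => by positivity) key hsum2
  calc ∑' ξ : ℤ, (1 + (ξ:ℝ)^2)^s₂ * ‖Gsymb h ξ * a ξ‖^2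
      ≤ ∑' ξ : ℤ, C^2 * ((1 + (ξ:ℝ)^2)^s₁ * ‖a ξ‖^2) := Summable.tsum_le_tsum key hsum1 hsum2
    _ = C^2 * ∑' ξ : ℤ, (1 + (ξ:ℝ)^2)^s₁ * ‖a ξ‖^2 := tsum_mul_left
end
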